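/- arXiv:math/0509159 — 3 statements merged into one kernel-verified Lean document; each statement's English description precedes it below -/
import Mathlib

section
/- For all natural numbers N ≥ 1 and k ≥ N², there exists a unital star-algebra homomorphism from M_N(ℂ) × M_{N+1}(ℂ) to M_k(ℂ). -/
open Matrix

noncomputable def reindexStarAlgHom {m n : Type*} [Fintype m] [DecidableEq m]
    [Fintype n] [DecidableEq n] (e : m ≃ n) :
    Matrix m m ℂ →⋆ₐ[ℂ] Matrix n n ℂ :=
  { (Matrix.reindexAlgEquiv ℂ ℂ e : Matrix m m ℂ ≃ₐ[ℂ] Matrix n n ℂ).toAlgHom with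
    map_star' := fun M => by
      simp [Matrix.reindexAlgEquiv_apply, star_eq_conjTranspose, conjTranspose_reindex] }

noncomputable def blockEmbed (N a b : ℕ) :
    (Matrix (Fin N) (Fin N) ℂ × Matrix (Fin (N + 1)) (Fin (N + 1)) ℂ) →⋆ₐ[ℂ]
      Matrix ((Fin N × Fin a) ⊕ (Fin (N + 1) × Fin b))
        ((Fin N × Fin a) ⊕ (Fin (N + 1) × Fin b)) ℂ where
  toFun p := fromBlocks (blockDiagonal fun _ => p.1) 0 0 (blockDiagonal fun _ => p.2)
  map_one' := by
    have h1 : (fun _ : Fin a => (1 : Matrix (Fin N) (Fin N) ℂ)) = 1 := rfl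
    have h2 : (fun _ : Fin b => (1 : Matrix (Fin (N+1)) (Fin (N+1)) ℂ)) = 1 := rfl
    simp only [Prod.fst_one, Prod.snd_one, h1, h2, blockDiagonal_one, fromBlocks_one]
  map_mul' p q := by
    simp only [Prod.fst_mul, Prod.snd_mul, blockDiagonal_mul, fromBlocks_multiply,
      Matrix.mul_zero, Matrix.zero_mul, add_zero, zero_add]
  map_zero' := by
    have h1 : (fun _ : Fin a => (0 : Matrix (Fin N) (Fin N) ℂ)) = 0 := rfl
    have h2 : (fun _ : Fin b => (0 : Matrix (Fin (N+1)) (Fin (N+1)) ℂ)) = 0 := rfl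
    simp only [Prod.fst_zero, Prod.snd_zero, h1, h2, blockDiagonal_zero, fromBlocks_zero]
  map_add' p q := by
    have h1 : (fun _ : Fin a => p.1 + q.1)
        = (fun _ : Fin a => p.1) + (fun _ : Fin a => q.1) := rfl
    have h2 : (fun _ : Fin b => p.2 + q.2)
        = (fun _ : Fin b => p.2) + (fun _ : Fin b => q.2) := rfl
    simp only [Prod.fst_add, Prod.snd_add, h1, h2, blockDiagonal_add, fromBlocks_add, add_zero]
  commutes' c := by
    have h1 : (algebraMap ℂ (Matrix (Fin N) (Fin N) ℂ)) c = c • 1 :=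
      Algebra.algebraMap_eq_smul_one c
    have h2 : (algebraMap ℂ (Matrix (Fin (N+1)) (Fin (N+1)) ℂ)) c = c • 1 :=
      Algebra.algebraMap_eq_smul_one c
    have h3 : (algebraMap ℂ (Matrix ((Fin N × Fin a) ⊕ (Fin (N + 1) × Fin b))
        ((Fin N × Fin a) ⊕ (Fin (N + 1) × Fin b)) ℂ)) c = c • 1 :=
      Algebra.algebraMap_eq_smul_one c
    have s1 : (fun _ : Fin a => c • (1 : Matrix (Fin N) (Fin N) ℂ))
        = c • (1 : Fin a → Matrix (Fin N) (Fin N) ℂ) := rfl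
    have s2 : (fun _ : Fin b => c • (1 : Matrix (Fin (N+1)) (Fin (N+1)) ℂ))
        = c • (1 : Fin b → Matrix (Fin (N+1)) (Fin (N+1)) ℂ) := rfl
    have key : c • (1 : Matrix ((Fin N × Fin a) ⊕ (Fin (N + 1) × Fin b))
        ((Fin N × Fin a) ⊕ (Fin (N + 1) × Fin b)) ℂ)
        = fromBlocks (c • 1) 0 0 (c • 1) := by
      rw [← fromBlocks_one, fromBlocks_smul]; simp only [smul_zero]
    simp only [Prod.algebraMap_apply, h1, h2, h3, s1, s2, blockDiagonal_smul,
      blockDiagonal_one, key]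
  map_star' p := by
    have h1 : (fun _ : Fin a => star p.1) = fun x : Fin a => (p.1)ᴴ := rfl
    simp only [Prod.fst_star, Prod.snd_star, star_eq_conjTranspose,
      fromBlocks_conjTranspose, ← blockDiagonal_conjTranspose, conjTranspose_zero]

theorem exists_unital_starAlgHom_MN_MN1_to_Mk (N k : ℕ) (hN : 1 ≤ N) (hk : N ^ 2 ≤ k) :
    Nonempty ((Matrix (Fin N) (Fin N) ℂ × Matrix (Fin (N + 1)) (Fin (N + 1)) ℂ) →⋆ₐ[ℂ]
      Matrix (Fin k) (Fin k) ℂ) := by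
  obtain ⟨a, b, hab⟩ : ∃ a b, N * a + (N + 1) * b = k := by
    refine ⟨k / N - k % N, k % N, ?_⟩
    have hd : N * (k / N) + k % N = k := Nat.div_add_mod k N
    have hr : k % N < N := Nat.mod_lt _ hN
    have hq : N ≤ k / N := by
      rw [Nat.le_div_iff_mul_le hN]
      nlinarith [sq_nonneg N]
    have hrq : k % N ≤ k / N := le_trans (le_of_lt hr) hq
    have : N * (k / N - k % N) + (N + 1) * (k % N)
        = N * ((k / N - k % N) + k % N) + k % N := by ring
    rw [this, Nat.sub_add_cancel hrq, hd]
  have hcard : Fintype.card ((Fin N × Fin a) ⊕ (Fin (N + 1) × Fin b)) = k := by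
    simp [Fintype.card_sum, Fintype.card_prod, hab]
  let e : ((Fin N × Fin a) ⊕ (Fin (N + 1) × Fin b)) ≃ Fin k :=
    (Fintype.equivFin _).trans (finCongr hcard)
  exact ⟨(reindexStarAlgHom e).comp (blockEmbed N a b)⟩
end

section
/- Let p, q ≥ 2 be coprime natural numbers, let m ≥ 1, and let k₁, …, k_m be natural numbers with k_j > pq − p − q for every j. Then there exists a unital star-algebra homomorphism from the prime dimension drop algebra I[p,pq,q] to the finite-dimensional star-algebra M_{k₁}(ℂ) × ⋯ × M_{k_m}(ℂ). -/
open Kronecker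

/-- The prime dimension drop algebra `I[p, pq, q]`: continuous functions
`f : [0,1] → M_{pq}(ℂ)` with `f 0 = a ⊗ 1` and `f 1 = 1 ⊗ b`. -/
noncomputable def primeDimDrop (p q : ℕ) :
    StarSubalgebra ℂ C(unitInterval, Matrix (Fin p × Fin q) (Fin p × Fin q) ℂ) where
  carrier := {f |
    (∃ a : Matrix (Fin p) (Fin p) ℂ, f 0 = a ⊗ₖ (1 : Matrix (Fin q) (Fin q) ℂ)) ∧
    (∃ b : Matrix (Fin q) (Fin q) ℂ, f 1 = (1 : Matrix (Fin p) (Fin p) ℂ) ⊗ₖ b)}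
  mul_mem' := by
    rintro f g ⟨⟨a, ha⟩, ⟨b, hb⟩⟩ ⟨⟨a', ha'⟩, ⟨b', hb'⟩⟩
    have h1 : (a ⊗ₖ (1 : Matrix (Fin q) (Fin q) ℂ)) * (a' ⊗ₖ 1) = (a * a') ⊗ₖ 1 := by
      rw [← Matrix.mul_kronecker_mul, one_mul]
    have h2 : ((1 : Matrix (Fin p) (Fin p) ℂ) ⊗ₖ b) * (1 ⊗ₖ b') = 1 ⊗ₖ (b * b') := by
      rw [← Matrix.mul_kronecker_mul, one_mul]
    exact ⟨⟨a * a', by simp [ha, ha', h1]⟩, ⟨b * b', by simp [hb, hb', h2]⟩⟩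
  one_mem' := by
    exact ⟨⟨1, by simp [Matrix.one_kronecker_one]⟩, ⟨1, by simp [Matrix.one_kronecker_one]⟩⟩
  add_mem' := by
    rintro f g ⟨⟨a, ha⟩, ⟨b, hb⟩⟩ ⟨⟨a', ha'⟩, ⟨b', hb'⟩⟩
    exact ⟨⟨a + a', by simp [ha, ha', Matrix.add_kronecker]⟩,
      ⟨b + b', by simp [hb, hb', Matrix.kronecker_add]⟩⟩
  zero_mem' := by
    exact ⟨⟨0, by simp [Matrix.zero_kronecker]⟩, ⟨0, by simp [Matrix.kronecker_zero]⟩⟩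
  algebraMap_mem' := by
    intro c
    refine ⟨⟨c • 1, ?_⟩, ⟨c • 1, ?_⟩⟩ <;>
      simp [Algebra.algebraMap_eq_smul_one, Matrix.smul_kronecker,
        Matrix.kronecker_smul, Matrix.one_kronecker_one]
  star_mem' := by
    rintro f ⟨⟨a, ha⟩, ⟨b, hb⟩⟩
    have h1 : (a ⊗ₖ (1 : Matrix (Fin q) (Fin q) ℂ)).conjTranspose = a.conjTranspose ⊗ₖ 1 := by
      ext ⟨i, j⟩ ⟨k, l⟩
      by_cases h : j = l <;> simp [Matrix.conjTranspose_apply, Matrix.one_apply, h, Ne.symm]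
    have h2 : ((1 : Matrix (Fin p) (Fin p) ℂ) ⊗ₖ b).conjTranspose = 1 ⊗ₖ b.conjTranspose := by
      ext ⟨i, j⟩ ⟨k, l⟩
      by_cases h : i = k <;> simp [Matrix.conjTranspose_apply, Matrix.one_apply, h, Ne.symm]
    exact ⟨⟨a.conjTranspose, by simp [Matrix.star_eq_conjTranspose, ha, h1]⟩,
      ⟨b.conjTranspose, by simp [Matrix.star_eq_conjTranspose, hb, h2]⟩⟩
/-!
Evaluation at the endpoints gives unital *-homomorphisms `I[p,pq,q] → M_p` (reading `a` off
`f 0 = a ⊗ 1`) and `I[p,pq,q] → M_q` (reading `b` off `f 1 = 1 ⊗ b`). As `p` and `q` are coprime,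
`pq - p - q` is the Frobenius number of `{p, q}`, so every larger `k` is `αp + βq` with `α, β ∈ ℕ`;
the block-diagonal sum of `α` copies of the first map and `β` copies of the second is then a
unital *-homomorphism into `M_k`.
-/

namespace StarAlgHom

variable {R A ι : Type*} {B : ι → Type*} [CommSemiring R] [Semiring A] [Algebra R A] [Star A]
  [∀ i, Semiring (B i)] [∀ i, Algebra R (B i)] [∀ i, Star (B i)]

def pi (f : ∀ i, A →⋆ₐ[R] B i) : A →⋆ₐ[R] ∀ i, B i :=
  { AlgHom.pi fun i => (f i).toAlgHom with
    map_star' := fun a => funext fun i => map_star (f i) a }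

end StarAlgHom

namespace Matrix

variable {R : Type*} [CommSemiring R] [StarRing R]
  {m n : Type*} [Fintype m] [DecidableEq m] [Fintype n] [DecidableEq n]

variable (R m n) in
@[simps]
def kroneckerOneStarAlgHom : Matrix m m R →⋆ₐ[R] Matrix (m × n) (m × n) R where
  toFun a := a ⊗ₖ 1
  map_one' := one_kronecker_one
  map_mul' a b := by rw [← mul_kronecker_mul, one_mul]
  map_zero' := zero_kronecker _
  map_add' a b := add_kronecker a b 1
  commutes' r := by simp [Algebra.algebraMap_eq_smul_one, smul_kronecker]
  map_star' a := by simp [star_eq_conjTranspose, conjTranspose_kronecker]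

variable (R m n) in
@[simps]
def oneKroneckerStarAlgHom : Matrix n n R →⋆ₐ[R] Matrix (m × n) (m × n) R where
  toFun b := 1 ⊗ₖ b
  map_one' := one_kronecker_one
  map_mul' a b := by rw [← mul_kronecker_mul, one_mul]
  map_zero' := kronecker_zero _
  map_add' a b := kronecker_add 1 a b
  commutes' r := by simp [Algebra.algebraMap_eq_smul_one, kronecker_smul]
  map_star' a := by simp [star_eq_conjTranspose, conjTranspose_kronecker]

theorem kroneckerOneStarAlgHom_injective [Nonempty n] :
    Function.Injective (kroneckerOneStarAlgHom R m n) := by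
  intro a b h
  obtain ⟨j⟩ := ‹Nonempty n›
  ext i i'
  simpa using congr_fun₂ h (i, j) (i', j)

theorem oneKroneckerStarAlgHom_injective [Nonempty m] :
    Function.Injective (oneKroneckerStarAlgHom R m n) := by
  intro a b h
  obtain ⟨i⟩ := ‹Nonempty m›
  ext j j'
  simpa using congr_fun₂ h (i, j) (i, j')

variable (R m n) in
def fromBlocksStarAlgHom : Matrix m m R × Matrix n n R →⋆ₐ[R] Matrix (m ⊕ n) (m ⊕ n) R where
  toFun ab := fromBlocks ab.1 0 0 ab.2
  map_one' := fromBlocks_one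
  map_mul' a b := by simp [fromBlocks_multiply]
  map_zero' := fromBlocks_zero
  map_add' a b := by simp [fromBlocks_add]
  commutes' r := by simp [Algebra.algebraMap_eq_smul_one, ← fromBlocks_one, fromBlocks_smul]
  map_star' ab := by simp [star_eq_conjTranspose, fromBlocks_conjTranspose]

def reindexStarAlgHom (e : m ≃ n) : Matrix m m R →⋆ₐ[R] Matrix n n R :=
  { (reindexAlgEquiv R R e).toAlgHom with
    map_star' := fun a => by simp [star_eq_conjTranspose] }

theorem nonempty_starAlgHom_of_mem_closure_pair {A : Type*} [Semiring A] [Algebra R A] [Star A]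
    {p q k : ℕ}
    (f : A →⋆ₐ[R] Matrix (Fin p) (Fin p) R) (g : A →⋆ₐ[R] Matrix (Fin q) (Fin q) R)
    (hk : k ∈ AddSubmonoid.closure {p, q}) :
    Nonempty (A →⋆ₐ[R] Matrix (Fin k) (Fin k) R) := by
  obtain ⟨α, β, rfl⟩ := (AddSubmonoid.mem_closure_pair _ _ _).1 hk
  let e : (Fin p × Fin α) ⊕ (Fin q × Fin β) ≃ Fin (α • p + β • q) :=
    (Equiv.sumCongr finProdFinEquiv finProdFinEquiv).trans <|
      finSumFinEquiv.trans <| finCongr <| by simp only [smul_eq_mul, mul_comm]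
  exact ⟨(reindexStarAlgHom e).comp <| (fromBlocksStarAlgHom R _ _).comp <|
    ((kroneckerOneStarAlgHom R _ _).comp f).prod ((kroneckerOneStarAlgHom R _ _).comp g)⟩

end Matrix

namespace primeDimDrop

variable (p q : ℕ)

noncomputable def evalAt (t : unitInterval) :
    primeDimDrop p q →⋆ₐ[ℂ] Matrix (Fin p × Fin q) (Fin p × Fin q) ℂ where
  toFun f := (f : C(unitInterval, Matrix (Fin p × Fin q) (Fin p × Fin q) ℂ)) t
  map_one' := rfl
  map_mul' _ _ := rfl
  map_zero' := rfl
  map_add' _ _ := rfl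
  commutes' _ := rfl
  map_star' _ := rfl

noncomputable def evalZero [NeZero q] : primeDimDrop p q →⋆ₐ[ℂ] Matrix (Fin p) (Fin p) ℂ :=
  (StarAlgEquiv.ofInjective _ Matrix.kroneckerOneStarAlgHom_injective).symm.toStarAlgHom.comp <|
    (evalAt p q 0).codRestrict (Matrix.kroneckerOneStarAlgHom ℂ (Fin p) (Fin q)).range
      fun f => by obtain ⟨a, ha⟩ := f.2.1; exact ⟨a, ha.symm⟩

noncomputable def evalOne [NeZero p] : primeDimDrop p q →⋆ₐ[ℂ] Matrix (Fin q) (Fin q) ℂ :=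
  (StarAlgEquiv.ofInjective _ Matrix.oneKroneckerStarAlgHom_injective).symm.toStarAlgHom.comp <|
    (evalAt p q 1).codRestrict (Matrix.oneKroneckerStarAlgHom ℂ (Fin p) (Fin q)).range
      fun f => by obtain ⟨b, hb⟩ := f.2.2; exact ⟨b, hb.symm⟩

end primeDimDrop

theorem primeDimDrop_embeds_in_finiteDimensional_general (p q m : ℕ) (hp : 2 ≤ p) (hq : 2 ≤ q)
    (hpq : Nat.Coprime p q) (k : Fin m → ℕ)
    (hk : ∀ j, p * q - p - q < k j) :
    Nonempty ((primeDimDrop p q) →⋆ₐ[ℂ]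
      (∀ j : Fin m, Matrix (Fin (k j)) (Fin (k j)) ℂ)) := by
  have : NeZero p := ⟨by omega⟩
  have : NeZero q := ⟨by omega⟩
  have hmem (j : Fin m) : k j ∈ AddSubmonoid.closure {p, q} := by
    by_contra h
    exact (hk j).not_ge ((frobeniusNumber_pair hpq hp hq).2 h)
  exact ⟨StarAlgHom.pi fun j => (Matrix.nonempty_starAlgHom_of_mem_closure_pair
    (primeDimDrop.evalZero p q)
    (primeDimDrop.evalOne p q) (hmem j)).some⟩

theorem primeDimDrop_embeds_in_finiteDimensional (p q m : ℕ) (hp : 2 ≤ p) (hq : 2 ≤ q)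
    (hpq : Nat.Coprime p q) (hm : 1 ≤ m) (k : Fin m → ℕ)
    (hk : ∀ j, p * q - p - q < k j) :
    Nonempty ((primeDimDrop p q) →⋆ₐ[ℂ]
      (∀ j : Fin m, Matrix (Fin (k j)) (Fin (k j)) ℂ)) :=
  primeDimDrop_embeds_in_finiteDimensional_general p q m hp hq hpq k hk
end

section
/- Let X be a compact Hausdorff topological space, let n ≥ 1, and let G be a dense additive subgroup of the normed space C(X, ℝ) of continuous real-valued functions on X with the supremum norm. Then the additive subgroup of C(Xⁿ, ℝ) generated by the elementary tensors (x₁, …, x_n) ↦ ∏_{i=1}^n g_i(x_i), where g₁, …, g_n range over G, is dense in C(Xⁿ, ℝ). -/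
/-!
Products `∏ i, gᵢ ∘ prᵢ` with arbitrary `gᵢ ∈ C(X, ℝ)` form a multiplicative monoid that is
closed under real scalars (absorb the scalar into one factor), so its additive span is a
subalgebra; it separates points, hence is dense by Stone–Weierstrass. As the product map is
continuous, each such product is a limit of products with `gᵢ ∈ G`, so the closed subgroup
generated by the latter contains that dense subalgebra.
-/

theorem Submodule.span_toAddSubmonoid_eq_closure_of_smul_mem {R M : Type*} [Semiring R]
    [AddCommMonoid M] [Module R M] {s : Set M} (hs : ∀ (c : R), ∀ x ∈ s, c • x ∈ s) :
    (span R s).toAddSubmonoid = AddSubmonoid.closure s := by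
  rw [span_eq_closure]
  congr 1
  refine (Set.smul_subset_iff.2 fun c _ x hx => hs c x hx).antisymm fun x hx => ?_
  exact ⟨1, Set.mem_univ _, x, hx, one_smul R x⟩

theorem Algebra.coe_adjoin_eq_addSubmonoidClosure_of_smul_mem {R A : Type*} [CommSemiring R]
    [Semiring A] [Algebra R A] (M : Submonoid A) (hM : ∀ (c : R), ∀ x ∈ M, c • x ∈ M) :
    (adjoin R (M : Set A) : Set A) = AddSubmonoid.closure (M : Set A) := by
  have hspan : Subalgebra.toSubmodule (adjoin R (M : Set A)) = Submodule.span R M := by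
    rw [adjoin_eq_span, Submonoid.closure_eq]
  exact congrArg SetLike.coe <| (congrArg Submodule.toAddSubmonoid hspan).trans <|
    Submodule.span_toAddSubmonoid_eq_closure_of_smul_mem hM

theorem dense_addSubgroupClosure_of_subset_closure {G : Type*} [TopologicalSpace G] [AddGroup G]
    [IsTopologicalAddGroup G] {s t : Set G} (hst : s ⊆ closure t)
    (hs : Dense (AddSubgroup.closure s : Set G)) : Dense (AddSubgroup.closure t : Set G) := by
  have : AddSubgroup.closure s ≤ (AddSubgroup.closure t).topologicalClosure :=
    AddSubgroup.closure_le _ |>.2 (hst.trans (closure_mono AddSubgroup.subset_closure))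
  exact dense_closure.1 (hs.mono this)

namespace ContinuousMap

open Set

variable {X ι : Type*} [TopologicalSpace X] [Fintype ι]

def elementaryTensor : (ι → C(X, ℝ)) →* C(ι → X, ℝ) where
  toFun g := ∏ i, (g i).comp (eval i)
  map_one' := by simp
  map_mul' g h := by simp [Finset.prod_mul_distrib]

theorem elementaryTensor_apply (g : ι → C(X, ℝ)) :
    elementaryTensor g = ∏ i, (g i).comp (eval i) := rfl

theorem continuous_elementaryTensor [LocallyCompactSpace X] :
    Continuous (elementaryTensor (X := X) (ι := ι)) :=
  continuous_finsetProd _ fun i _ => (continuous_precomp (eval i)).comp (continuous_apply i)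

theorem elementaryTensor_mulSingle [DecidableEq ι] (i : ι) (f : C(X, ℝ)) :
    elementaryTensor (Pi.mulSingle i f) = f.comp (eval i) := by
  rw [elementaryTensor_apply, Finset.prod_eq_single_of_mem i (Finset.mem_univ i)
    fun j _ hj => by rw [Pi.mulSingle_eq_of_ne hj, one_comp], Pi.mulSingle_eq_same]

theorem smul_mem_mrange_elementaryTensor [Nonempty ι] (c : ℝ) {h : C(ι → X, ℝ)}
    (hh : h ∈ MonoidHom.mrange (elementaryTensor (X := X) (ι := ι))) :
    c • h ∈ MonoidHom.mrange (elementaryTensor (X := X) (ι := ι)) := by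
  classical
  obtain ⟨i⟩ := ‹Nonempty ι›
  have hc : algebraMap ℝ C(ι → X, ℝ) c =
      elementaryTensor (Pi.mulSingle i (algebraMap ℝ _ c)) := by
    rw [elementaryTensor_mulSingle]; rfl
  rw [Algebra.smul_def, hc]
  exact mul_mem ⟨_, rfl⟩ hh

theorem separatesPoints_adjoin_range_elementaryTensor [T35Space X] :
    (Algebra.adjoin ℝ (range (elementaryTensor (X := X) (ι := ι)))).SeparatesPoints := by
  classical
  intro x y hxy
  obtain ⟨i, hi⟩ := Function.ne_iff.1 hxy
  obtain ⟨f, hf, hfi⟩ := separatesPoints_continuous_of_t35Space hi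
  refine ⟨_, ⟨_, Algebra.subset_adjoin ⟨Pi.mulSingle i ⟨f, hf⟩, rfl⟩, rfl⟩, ?_⟩
  simpa [elementaryTensor_mulSingle] using hfi

theorem dense_addSubgroupClosure_range_elementaryTensor [Nonempty ι] [CompactSpace X]
    [T35Space X] :
    Dense (AddSubgroup.closure (range (elementaryTensor (X := X) (ι := ι))) :
      Set C(ι → X, ℝ)) := by
  have hsep := separatesPoints_adjoin_range_elementaryTensor (X := X) (ι := ι)
  rw [← MonoidHom.coe_mrange] at hsep ⊢
  set M := MonoidHom.mrange (elementaryTensor (X := X) (ι := ι))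
  have hadjoin := Algebra.coe_adjoin_eq_addSubmonoidClosure_of_smul_mem M
    fun c _ => smul_mem_mrange_elementaryTensor c
  have hdense : Dense (Algebra.adjoin ℝ (M : Set C(ι → X, ℝ)) : Set C(ι → X, ℝ)) := by
    rw [dense_iff_closure_eq, ← Subalgebra.topologicalClosure_coe,
      subalgebra_topologicalClosure_eq_top_of_separatesPoints _ hsep]
    rfl
  rw [hadjoin] at hdense
  exact hdense.mono (AddSubmonoid.closure_le.2 AddSubgroup.subset_closure)

theorem dense_addSubgroupClosure_image_elementaryTensor [Nonempty ι] [CompactSpace X]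
    [T35Space X] {S : Set C(X, ℝ)} (hS : Dense S) :
    Dense (AddSubgroup.closure (elementaryTensor '' univ.pi fun _ : ι => S) :
      Set C(ι → X, ℝ)) :=
  dense_addSubgroupClosure_of_subset_closure
    (continuous_elementaryTensor.range_subset_closure_image_dense (dense_pi univ fun _ _ => hS))
    dense_addSubgroupClosure_range_elementaryTensor

end ContinuousMap

theorem dense_subgroup_elementary_tensors
    (X : Type) [TopologicalSpace X] [CompactSpace X] [T2Space X]
    (n : ℕ) (hn : 1 ≤ n) (G : AddSubgroup C(X, ℝ))
    (hG : Dense (G : Set C(X, ℝ))) :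
    Dense ((AddSubgroup.closure
      {h : C((Fin n → X), ℝ) |
        ∃ g : Fin n → C(X, ℝ), (∀ i, g i ∈ G) ∧
          h = ∏ i, (g i).comp
            (⟨fun x => x i, continuous_apply i⟩ : C((Fin n → X), X))} :
        AddSubgroup C((Fin n → X), ℝ)) : Set C((Fin n → X), ℝ)) := by
  have : Nonempty (Fin n) := Fin.pos_iff_nonempty.1 hn
  refine (ContinuousMap.dense_addSubgroupClosure_image_elementaryTensor hG).mono
    (AddSubgroup.closure_mono ?_)
  rintro _ ⟨g, hg, rfl⟩
  exact ⟨g, fun i => hg i (Set.mem_univ i), rfl⟩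
end
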